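/- arXiv:2604.13253 — 4 statements merged into one kernel-verified Lean document; each statement's English description precedes it below -/
import Mathlib

section
/- Let α ∈ (0,1), γ > 0, and let (err_t)_{t≥1} take values in {0,1} and (α_t)_{t≥1} satisfy the ACI recursion α_{t+1} = α_t + γ(α − err_t) with α_1 ∈ [0,1]. Assume the saturation property that err_t = 0 whenever α_t ≤ 0 and err_t = 1 whenever α_t ≥ 1. Then α_t ∈ [−γ(1 − α), 1 + γα] for all t ≥ 1. -/
/-! Saturation makes `[-γ(1-α), 1 + γα]` invariant under one ACI step: an upward step `+γα`
happens only from below `1`, a downward step `-γ(1-α)` only from above `0`. -/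

open Set

theorem aci_step_mem_Icc {α γ x e : ℝ} (hα : α ∈ Icc (0 : ℝ) 1) (hγ : 0 ≤ γ)
    (hx : x ∈ Icc (-(γ * (1 - α))) (1 + γ * α)) (he : e = 0 ∨ e = 1)
    (hsat0 : x ≤ 0 → e = 0) (hsat1 : 1 ≤ x → e = 1) :
    x + γ * (α - e) ∈ Icc (-(γ * (1 - α))) (1 + γ * α) := by
  obtain ⟨hα0, hα1⟩ := hα
  obtain ⟨hx0, hx1⟩ := hx
  rcases he with rfl | rfl
  · have hlt : x < 1 := lt_of_not_ge fun h => absurd (hsat1 h) (by norm_num)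
    constructor <;> nlinarith
  · have hpos : 0 < x := lt_of_not_ge fun h => absurd (hsat0 h) (by norm_num)
    constructor <;> nlinarith

/-- **Boundedness of the ACI iterates under saturation.**
Let `α ∈ (0,1)`, `γ > 0`, let `(err t)` take values in `{0,1}`, and let `(a t)`
satisfy the ACI recursion `a (t+1) = a t + γ (α - err t)` with `a 1 ∈ [0,1]`.
Assume saturation: `err t = 0` whenever `a t ≤ 0` and `err t = 1` whenever `a t ≥ 1`.
Then `a t ∈ [-γ (1 - α), 1 + γ α]` for all `t ≥ 1`. -/
theorem aci_iterates_bounded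
    (α γ : ℝ) (hα : α ∈ Set.Ioo (0 : ℝ) 1) (hγ : 0 < γ)
    (err a : ℕ → ℝ)
    (herr : ∀ t, 1 ≤ t → err t = 0 ∨ err t = 1)
    (hrec : ∀ t, 1 ≤ t → a (t + 1) = a t + γ * (α - err t))
    (hinit : a 1 ∈ Set.Icc (0 : ℝ) 1)
    (hsat0 : ∀ t, 1 ≤ t → a t ≤ 0 → err t = 0)
    (hsat1 : ∀ t, 1 ≤ t → 1 ≤ a t → err t = 1) :
    ∀ t, 1 ≤ t → a t ∈ Set.Icc (-(γ * (1 - α))) (1 + γ * α) := by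
  have hα' : α ∈ Icc (0 : ℝ) 1 := Ioo_subset_Icc_self hα
  intro t ht
  induction t, ht using Nat.le_induction with
  | base =>
    refine Icc_subset_Icc ?_ ?_ hinit
    · nlinarith [hα'.2]
    · nlinarith [hα'.1]
  | succ n hn ih =>
    rw [hrec n hn]
    exact aci_step_mem_Icc hα' hγ.le ih (herr n hn) (hsat0 n hn) (hsat1 n hn)
end

section
/- Let α ∈ (0,1), γ > 0, let (err_t)_{t≥1} be any real sequence and (α_t)_{t≥1} satisfy the ACI recursion α_{t+1} = α_t + γ(α − err_t). If there are constants m ≤ M with α_t ∈ [m, M] for all 1 ≤ t ≤ T+1, then |(1/T)∑_{t=1}^{T} err_t − α| ≤ (M − m)/(γ·T). -/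
/-- **Finite-time coverage-error bound for ACI.**
Let `α ∈ (0,1)`, `γ > 0`, let `(err t)` be any real sequence and `(a t)` satisfy the
ACI recursion `a (t+1) = a t + γ (α - err t)`. If `a t ∈ [m, M]` for all `1 ≤ t ≤ T+1`,
then `|(1/T) ∑_{t=1}^T err t - α| ≤ (M - m) / (γ T)`. -/
theorem aci_coverage_error_bound
    (α γ : ℝ) (hα : α ∈ Set.Ioo (0 : ℝ) 1) (hγ : 0 < γ)
    (err a : ℕ → ℝ)
    (hrec : ∀ t, 1 ≤ t → a (t + 1) = a t + γ * (α - err t))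
    (m M : ℝ) (hmM : m ≤ M)
    (T : ℕ) (hT : 1 ≤ T)
    (hbound : ∀ t, 1 ≤ t → t ≤ T + 1 → a t ∈ Set.Icc m M) :
    |(1 / (T : ℝ)) * ∑ t ∈ Finset.Icc 1 T, err t - α| ≤ (M - m) / (γ * T) := by
  have key : ∀ S : ℕ, a (S + 1) = a 1 + γ * ∑ t ∈ Finset.Icc 1 S, (α - err t) := by
    intro S
    induction S with
    | zero => simp
    | succ n ih =>
      rw [Finset.sum_Icc_succ_top (by omega : 1 ≤ n + 1), hrec (n+1) (by omega), ih]
      ring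
  have hTpos : (0 : ℝ) < T := by exact_mod_cast hT
  have hsum : ∑ t ∈ Finset.Icc 1 T, (α - err t) =
      (T : ℝ) * α - ∑ t ∈ Finset.Icc 1 T, err t := by
    rw [Finset.sum_sub_distrib, Finset.sum_const, Nat.card_Icc]
    simp
  have hkey := key T
  rw [hsum] at hkey
  have h1 := hbound 1 le_rfl (by omega)
  have h2 := hbound (T+1) (by omega) le_rfl
  have habs : |a 1 - a (T + 1)| ≤ M - m := by
    rw [abs_le]
    constructor <;> [linarith [h1.1, h2.2]; linarith [h1.2, h2.1]]
  have : (1 / (T : ℝ)) * ∑ t ∈ Finset.Icc 1 T, err t - α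
      = (a 1 - a (T + 1)) / (γ * T) := by
    field_simp
    nlinarith [hkey]
  rw [this, abs_div, abs_of_pos (by positivity : (0:ℝ) < γ * T)]
  exact div_le_div_of_nonneg_right habs (by positivity) |>.trans_eq rfl
end

section
/- Let σ > 0, b ∈ ℝ with b ≠ 0, and t > 0. Then the inequality of Gaussian symmetric-interval probabilities is strict: (gaussianReal b σ²){x : |x| ≤ t} < (gaussianReal 0 σ²){x : |x| ≤ t}. Consequently, for nonzero bias the ACI quantile is strictly larger: q_α(b) > q_α(0). -/
open MeasureTheory ProbabilityTheory

section GaussShiftAuxSection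
open Real Set intervalIntegral
open scoped NNReal ENNReal

namespace GaussShiftAux

lemma pdf_cont (μ : ℝ) (v : ℝ≥0) : Continuous (gaussianPDFReal μ v) := by
  rw [gaussianPDFReal_def]
  fun_prop

lemma pdf_intable (μ : ℝ) (v : ℝ≥0) (a b : ℝ) :
    IntervalIntegrable (gaussianPDFReal μ v) volume a b :=
  (pdf_cont μ v).intervalIntegrable a b

lemma pdf_anti {v : ℝ≥0} (hv : v ≠ 0) {x y : ℝ} (h : x ^ 2 ≤ y ^ 2) :
    gaussianPDFReal 0 v y ≤ gaussianPDFReal 0 v x := by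
  have hvpos : (0 : ℝ) < v := by positivity
  simp only [gaussianPDFReal, sub_zero]
  have hC : (0 : ℝ) < (√(2 * π * v))⁻¹ := by positivity
  refine mul_le_mul_of_nonneg_left (Real.exp_le_exp.2 ?_) hC.le
  apply div_le_div_of_nonneg_right ?_ ?_ |>.trans_eq rfl
  · linarith
  · linarith

lemma pdf_lt {v : ℝ≥0} (hv : v ≠ 0) {x y : ℝ} (h : x ^ 2 < y ^ 2) :
    gaussianPDFReal 0 v y < gaussianPDFReal 0 v x := by
  have hvpos : (0 : ℝ) < v := by positivity
  simp only [gaussianPDFReal, sub_zero]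
  have hC : (0 : ℝ) < (√(2 * π * v))⁻¹ := by positivity
  refine mul_lt_mul_of_pos_left (Real.exp_lt_exp.2 ?_) hC
  have h2v : (0 : ℝ) < 2 * v := by positivity
  gcongr

lemma even_integral {v : ℝ≥0} (a c : ℝ) :
    ∫ x in a..c, gaussianPDFReal 0 v x = ∫ x in (-c)..(-a), gaussianPDFReal 0 v x := by
  rw [← intervalIntegral.integral_comp_neg (fun x => gaussianPDFReal 0 v x)]
  simp [gaussianPDFReal, sub_zero, neg_sq]

lemma key {v : ℝ≥0} (hv : v ≠ 0) {b t : ℝ} (hb : 0 < b) (ht : 0 < t) :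
    ∫ x in (-t - b)..(t - b), gaussianPDFReal 0 v x <
      ∫ x in (-t)..t, gaussianPDFReal 0 v x := by
  have hsplit1 : (∫ x in (-t - b)..(t - b), gaussianPDFReal 0 v x)
      + ∫ x in (t - b)..t, gaussianPDFReal 0 v x
      = ∫ x in (-t - b)..t, gaussianPDFReal 0 v x :=
    integral_add_adjacent_intervals (pdf_intable _ _ _ _) (pdf_intable _ _ _ _)
  have hsplit2 : (∫ x in (-t - b)..(-t), gaussianPDFReal 0 v x)
      + ∫ x in (-t)..t, gaussianPDFReal 0 v x
      = ∫ x in (-t - b)..t, gaussianPDFReal 0 v x :=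
    integral_add_adjacent_intervals (pdf_intable _ _ _ _) (pdf_intable _ _ _ _)
  have h3 : ∫ x in (-t - b)..(-t), gaussianPDFReal 0 v x
      = ∫ x in t..(t + b), gaussianPDFReal 0 v x := by
    rw [even_integral]; norm_num [add_comm]
  have h4 : ∫ x in t..(t + b), gaussianPDFReal 0 v x
      = ∫ x in (t - b)..t, gaussianPDFReal 0 v (2 * t - x) := by
    rw [intervalIntegral.integral_comp_sub_left (fun x => gaussianPDFReal 0 v x) (2 * t)]
    norm_num [two_mul]
  have h5 : (∫ x in (t - b)..t, gaussianPDFReal 0 v (2 * t - x))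
      < ∫ x in (t - b)..t, gaussianPDFReal 0 v x := by
    apply integral_lt_integral_of_continuousOn_of_le_of_exists_lt (by linarith)
    · exact ((pdf_cont 0 v).comp (by continuity)).continuousOn
    · exact (pdf_cont 0 v).continuousOn
    · intro x hx
      exact pdf_anti hv (by nlinarith [hx.1, hx.2])
    · refine ⟨t - b / 2, Set.mem_Icc.2 ⟨by linarith, by linarith⟩, ?_⟩
      exact pdf_lt hv (by nlinarith)
  linarith


lemma key' {v : ℝ≥0} (hv : v ≠ 0) {b t : ℝ} (hb : b ≠ 0) (ht : 0 < t) :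
    ∫ x in (-t)..t, gaussianPDFReal b v x <
      ∫ x in (-t)..t, gaussianPDFReal 0 v x := by
  have hshift : ∫ x in (-t)..t, gaussianPDFReal b v x
      = ∫ x in (-t - b)..(t - b), gaussianPDFReal 0 v x := by
    rw [← intervalIntegral.integral_comp_sub_right (fun x => gaussianPDFReal 0 v x) b]
    congr 1
    ext x
    rw [gaussianPDFReal_sub, zero_add]
  rw [hshift]
  rcases lt_or_gt_of_ne hb with hblt | hbgt
  · have h := key hv (neg_pos.2 hblt) ht
    have h2 : ∫ x in (-t - b)..(t - b), gaussianPDFReal 0 v x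
        = ∫ x in (-t - -b)..(t - -b), gaussianPDFReal 0 v x := by
      rw [even_integral]
      congr 1 <;> ring
    rw [h2]; exact h
  · exact key hv hbgt ht

lemma measure_abs_le (c : ℝ) {v : ℝ≥0} (hv : v ≠ 0) {t : ℝ} (ht : 0 ≤ t) :
    gaussianReal c v {x : ℝ | |x| ≤ t}
      = ENNReal.ofReal (∫ x in (-t)..t, gaussianPDFReal c v x) := by
  have hset : {x : ℝ | |x| ≤ t} = Set.Icc (-t) t := by ext x; simp [abs_le]
  rw [hset, gaussianReal_apply_eq_integral _ hv, integral_Icc_eq_integral_Ioc,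
    ← intervalIntegral.integral_of_le (by linarith)]

lemma part1 (c : ℝ) {v : ℝ≥0} (hv : v ≠ 0) {b t : ℝ} (hb : b ≠ 0) (ht : 0 < t) :
    gaussianReal b v {x : ℝ | |x| ≤ t} < gaussianReal 0 v {x : ℝ | |x| ≤ t} := by
  rw [measure_abs_le b hv ht.le, measure_abs_le 0 hv ht.le]
  rw [ENNReal.ofReal_lt_ofReal_iff_of_nonneg]
  · exact key' hv hb ht
  · exact intervalIntegral.integral_nonneg (by linarith)
      fun u _ => gaussianPDFReal_nonneg _ _ _


lemma part2 {v : ℝ≥0} (hv : v ≠ 0) {b : ℝ} (hb : b ≠ 0) {α : ℝ} (hα : α ∈ Set.Ioo (0:ℝ) 1) :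
    sInf {s : ℝ | 0 ≤ s ∧ ENNReal.ofReal (1 - α) ≤ gaussianReal 0 v {x : ℝ | |x| ≤ s}} <
    sInf {s : ℝ | 0 ≤ s ∧ ENNReal.ofReal (1 - α) ≤ gaussianReal b v {x : ℝ | |x| ≤ s}} := by
  obtain ⟨hα0, hα1⟩ := hα
  set H : ℝ → ℝ → ℝ := fun c s => ∫ x in (-s)..s, gaussianPDFReal c v x with hH
  have hcont : ∀ c : ℝ, Continuous (H c) := by
    intro c
    have h1 : Continuous (fun s : ℝ => ∫ x in (0:ℝ)..s, gaussianPDFReal c v x) :=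
      intervalIntegral.continuous_primitive (fun a b => pdf_intable c v a b) 0
    have h2 : H c = fun s => (∫ x in (0:ℝ)..s, gaussianPDFReal c v x)
        - ∫ x in (0:ℝ)..(-s), gaussianPDFReal c v x := by
      funext s
      have h3 := integral_add_adjacent_intervals (a := (0:ℝ)) (b := -s) (c := s)
        (pdf_intable c v _ _) (pdf_intable c v _ _)
      simp only [hH]
      linarith
    rw [h2]
    exact h1.sub (h1.comp continuous_neg)
  have hmono : ∀ c s s' : ℝ, 0 ≤ s → s ≤ s' → H c s ≤ H c s' := by
    intro c s s' hs hss'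
    exact integral_mono_interval (by linarith) (by linarith) hss'
      (Filter.Eventually.of_forall fun x => gaussianPDFReal_nonneg _ _ _)
      (pdf_intable _ _ _ _)
  have hnonneg : ∀ c s : ℝ, 0 ≤ s → 0 ≤ H c s := fun c s hs =>
    intervalIntegral.integral_nonneg (by linarith) fun u _ => gaussianPDFReal_nonneg _ _ _
  have hzero : ∀ c : ℝ, H c 0 = 0 := by intro c; simp [hH]
  have hsetEq : ∀ c : ℝ,
      {s : ℝ | 0 ≤ s ∧ ENNReal.ofReal (1 - α) ≤ gaussianReal c v {x : ℝ | |x| ≤ s}}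
        = {s : ℝ | 0 ≤ s ∧ 1 - α ≤ H c s} := by
    intro c; ext s
    simp only [Set.mem_setOf_eq, and_congr_right_iff]
    intro hs
    rw [measure_abs_le c hv hs, ENNReal.ofReal_le_ofReal_iff (hnonneg c s hs)]
  rw [hsetEq 0, hsetEq b]
  set S0 := {s : ℝ | 0 ≤ s ∧ 1 - α ≤ H 0 s} with hS0
  set Sb := {s : ℝ | 0 ≤ s ∧ 1 - α ≤ H b s} with hSb
  have hSbne : Sb.Nonempty := by
    have hmonoset : Monotone (fun n : ℕ => {x : ℝ | |x| ≤ (n : ℝ)}) := by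
      intro m n hmn x hx
      simp only [Set.mem_setOf_eq] at hx ⊢
      exact hx.trans (by exact_mod_cast hmn)
    have hunion : (⋃ n : ℕ, {x : ℝ | |x| ≤ (n : ℝ)}) = Set.univ := by
      ext x
      simp only [Set.mem_iUnion, Set.mem_univ, iff_true, Set.mem_setOf_eq]
      exact ⟨⌈|x|⌉₊, Nat.le_ceil _⟩
    have hlim := tendsto_measure_iUnion_atTop (μ := gaussianReal b v) hmonoset
    rw [hunion, measure_univ] at hlim
    have hev : ∀ᶠ n : ℕ in Filter.atTop,
        ENNReal.ofReal (1 - α) < gaussianReal b v {x : ℝ | |x| ≤ (n : ℝ)} :=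
      hlim.eventually (eventually_gt_nhds (ENNReal.ofReal_lt_one.2 (by linarith)))
    obtain ⟨n, hn⟩ := hev.exists
    have hsn : (0 : ℝ) ≤ (n : ℝ) := Nat.cast_nonneg n
    refine ⟨(n : ℝ), hsn, ?_⟩
    have h := hn.le
    rw [measure_abs_le b hv hsn, ENNReal.ofReal_le_ofReal_iff (hnonneg b n hsn)] at h
    exact h
  have hclosed : ∀ c : ℝ, IsClosed {s : ℝ | 0 ≤ s ∧ 1 - α ≤ H c s} := fun c =>
    (isClosed_le continuous_const continuous_id).inter
      (isClosed_le continuous_const (hcont c))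
  have hbdd0 : BddBelow S0 := ⟨0, fun x hx => hx.1⟩
  have hbddb : BddBelow Sb := ⟨0, fun x hx => hx.1⟩
  have hsub : Sb ⊆ S0 := by
    intro s hs
    obtain ⟨hs0, hsle⟩ := hs
    rcases eq_or_lt_of_le hs0 with h0 | h0
    · exfalso
      rw [← h0, hzero b] at hsle
      linarith
    · exact ⟨hs0, hsle.trans (key' hv hb h0).le⟩
  have hS0ne : S0.Nonempty := hSbne.mono hsub
  have hq0mem : sInf S0 ∈ S0 := (hclosed 0).csInf_mem hS0ne hbdd0
  have hq0pos : 0 < sInf S0 := by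
    rcases eq_or_lt_of_le hq0mem.1 with h0 | h0
    · exfalso
      have h := hq0mem.2
      rw [← h0, hzero 0] at h
      linarith
    · exact h0
  have hleft : H 0 (sInf S0) ≤ 1 - α := by
    have hev : ∀ᶠ s in nhdsWithin (sInf S0) (Set.Iio (sInf S0)), H 0 s ≤ 1 - α := by
      filter_upwards [self_mem_nhdsWithin,
        (eventually_gt_nhds hq0pos).filter_mono nhdsWithin_le_nhds] with s hs1 hs2
      by_contra hcon
      push_neg at hcon
      exact absurd (csInf_le hbdd0 ⟨hs2.le, hcon.le⟩) (not_le.2 hs1)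
    exact le_of_tendsto (((hcont 0).tendsto (sInf S0)).mono_left nhdsWithin_le_nhds) hev
  have hqbmem : sInf Sb ∈ Sb := (hclosed b).csInf_mem hSbne hbddb
  by_contra hcon
  push_neg at hcon
  have h1 : 1 - α ≤ H b (sInf Sb) := hqbmem.2
  have h2 : H b (sInf Sb) ≤ H b (sInf S0) := hmono b _ _ hqbmem.1 hcon
  have h3 : H b (sInf S0) < H 0 (sInf S0) := key' hv hb hq0pos
  linarith

end GaussShiftAux


end GaussShiftAuxSection

/-- **Strict Gaussian symmetric-interval inequality for nonzero bias.**
For `σ > 0`, `b ≠ 0` and `t > 0`,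
`(gaussianReal b σ²){|x| ≤ t} < (gaussianReal 0 σ²){|x| ≤ t}`.  Consequently, for
nonzero bias the ACI quantile is strictly larger: `q_α(b) > q_α(0)`. -/
theorem gaussian_symmetric_interval_lt_of_shift
    (σ : ℝ) (hσ : 0 < σ) (b : ℝ) (hb : b ≠ 0) :
    (∀ t : ℝ, 0 < t →
      gaussianReal b ((σ ^ 2).toNNReal) {x : ℝ | |x| ≤ t} <
        gaussianReal 0 ((σ ^ 2).toNNReal) {x : ℝ | |x| ≤ t}) ∧
    (∀ α : ℝ, α ∈ Set.Ioo (0 : ℝ) 1 →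
      sInf {s : ℝ | 0 ≤ s ∧
          ENNReal.ofReal (1 - α) ≤ gaussianReal 0 ((σ ^ 2).toNNReal) {x : ℝ | |x| ≤ s}} <
      sInf {s : ℝ | 0 ≤ s ∧
          ENNReal.ofReal (1 - α) ≤ gaussianReal b ((σ ^ 2).toNNReal) {x : ℝ | |x| ≤ s}}) := by
  have hv : ((σ ^ 2).toNNReal) ≠ 0 := by
    refine (Real.toNNReal_pos.2 (by positivity)).ne'
  exact ⟨fun t ht => GaussShiftAux.part1 0 hv hb ht,
    fun α hα => GaussShiftAux.part2 hv hb hα⟩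
end

section
/- Let α ∈ (0,1), y ∈ ℝ, and let 0 ≤ q₀ ≤ q_b. Let c, c' ∈ ℝ be interval centres, and suppose the narrower interval covers the outcome: y ∈ [c − q₀, c + q₀]. Then for the Winkler score, W(c' − q_b, c' + q_b, y) − W(c − q₀, c + q₀, y) ≥ 2·(q_b − q₀). In particular, a correctly centred interval of half-width q₀ that covers y improves the Winkler score over any interval of half-width q_b by at least 2(q_b − q₀) (the Winkler improvement bound of Proposition 3, with q_b = q_α(b) the ACI quantile under bias and q₀ = q_α(0) the oracle quantile). -/
/-- The Winkler score at level `α` of the interval `[l, u]` at outcome `y`. -/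
noncomputable def winkler (α l u y : ℝ) : ℝ :=
  (u - l) + (2 / α) * max (l - y) 0 + (2 / α) * max (y - u) 0

/-- **Winkler improvement bound of Proposition 3.**
Let `α ∈ (0,1)`, `y ∈ ℝ`, `0 ≤ q₀ ≤ q_b`, and let `c, c'` be interval centres.  If
the narrower interval covers the outcome, `y ∈ [c - q₀, c + q₀]`, then
`W(c' - q_b, c' + q_b, y) - W(c - q₀, c + q₀, y) ≥ 2 (q_b - q₀)`: a correctly
centred covering interval of half-width `q₀` improves the Winkler score over any
interval of half-width `q_b` by at least `2 (q_b - q₀)`. -/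
theorem winkler_improvement_bound
    (α y c c' q₀ qb : ℝ) (hα : α ∈ Set.Ioo (0 : ℝ) 1)
    (hq₀ : 0 ≤ q₀) (hq : q₀ ≤ qb)
    (hcov : y ∈ Set.Icc (c - q₀) (c + q₀)) :
    2 * (qb - q₀) ≤ winkler α (c' - qb) (c' + qb) y - winkler α (c - q₀) (c + q₀) y := by
  obtain ⟨h1, h2⟩ := hcov
  have hα0 : 0 < α := hα.1
  have hpos : 0 ≤ 2 / α := by positivity
  have hn : winkler α (c - q₀) (c + q₀) y = 2 * q₀ := by
    unfold winkler
    rw [max_eq_right (by linarith), max_eq_right (by linarith)]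
    ring
  have hw : 2 * qb ≤ winkler α (c' - qb) (c' + qb) y := by
    unfold winkler
    have := mul_nonneg hpos (le_max_right (c' - qb - y) 0)
    have := mul_nonneg hpos (le_max_right (y - (c' + qb)) 0)
    linarith
  linarith
end
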